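/- (Per-step potential decrease for the multiplicative-weights update.) Let X be a finite set, μ a probability distribution on X, and ε ∈ (0,1). Let g* : X → Δ_L, h : X → ℝ^L, and f : X → ℝ^L with ‖f(x)‖∞ ≤ 1 for all x. Let ĝ : X → Δ_L satisfy Σ_{y=1}^L |ĝ(x)_y − softmax(h(x))_y| ≤ ε/10 for every x ∈ X, and suppose ⟨ĝ − g*, f⟩_μ > ε. Then Γ_μ(g*, h − εf) < Γ_μ(g*, h) − ε²/4. -/

import Mathlib

/-!
Writing `h - ε f = h + v` with `v = -ε f`, the divergence changes by
`Γ(g, h + v) - Γ(g, h) = lse(h + v) - lse(h) - ⟨g, v⟩`, and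
`lse(h + v) - lse(h) = ln E_{y ∼ softmax h}[e^{v_y}]` is at most `⟨softmax h, v⟩ + ε²/2`
by Hoeffding's lemma, since `|v_y| ≤ ε`. Replacing `softmax h` by `ĝ` costs at most `ε · ε/10`,
so averaging over `μ` gives a decrease of at least `ε⟨ĝ - g*, f⟩_μ - ε²/10 - ε²/2 > ε²/4`.
-/

noncomputable section

/-- Standard inner product on `ℝ^L`. -/
def dot {L : ℕ} (g h : Fin L → ℝ) : ℝ := ∑ y, g y * h y

/-- The probability simplex `Δ_L ⊆ ℝ^L`. -/
def simplex (L : ℕ) : Set (Fin L → ℝ) :=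
  {v | (∀ y, 0 ≤ v y) ∧ ∑ y, v y = 1}

/-- Negative Shannon entropy `φ_Sh(g) = ∑_y g_y ln g_y` (with `0 · ln 0 = 0`). -/
def negEnt {L : ℕ} (g : Fin L → ℝ) : ℝ := ∑ y, g y * Real.log (g y)

/-- Log-sum-exp function `lse(h) = ln (∑_y e^{h_y})`, the convex conjugate of `negEnt`. -/
def lse {L : ℕ} (h : Fin L → ℝ) : ℝ := Real.log (∑ y, Real.exp (h y))

/-- Softmax function `softmax(h)_y = e^{h_y} / ∑_z e^{h_z}`. -/
def softmax {L : ℕ} (h : Fin L → ℝ) : Fin L → ℝ :=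
  fun y => Real.exp (h y) / ∑ z, Real.exp (h z)

/-- Fenchel–Young divergence `Γ(g,h) = φ_Sh(g) + lse(h) - ⟨g,h⟩`. -/
def FYsh {L : ℕ} (g h : Fin L → ℝ) : ℝ := negEnt g + lse h - dot g h

/-- `Γ_μ(g,h) = E_{x∼μ}[Γ(g(x),h(x))]`. -/
def FYmu {X : Type*} [Fintype X] {L : ℕ} (μ : X → ℝ)
    (g h : X → Fin L → ℝ) : ℝ := ∑ x, μ x * FYsh (g x) (h x)

/-- `⟨g,h⟩_μ = E_{x∼μ}[⟨g(x),h(x)⟩]`. -/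
def innerMu {X : Type*} [Fintype X] {L : ℕ} (μ : X → ℝ)
    (g h : X → Fin L → ℝ) : ℝ := ∑ x, μ x * dot (g x) (h x)

open Real ProbabilityTheory MeasureTheory

theorem log_sum_mul_exp_le {ι : Type*} [Fintype ι] {p : ι → ℝ} (hp0 : ∀ i, 0 ≤ p i)
    (hp1 : ∑ i, p i = 1) {v : ι → ℝ} {c : ℝ} (hv : ∀ i, |v i| ≤ c) :
    log (∑ i, p i * exp (v i)) ≤ ∑ i, p i * v i + c ^ 2 / 2 := by
  let _ : MeasurableSpace ι := ⊤
  have : DiscreteMeasurableSpace ι := ⟨fun _ => trivial⟩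
  let P : PMF ι := PMF.ofFintype (fun i => ENNReal.ofReal (p i)) (by
    rw [← ENNReal.ofReal_sum_of_nonneg fun i _ => hp0 i, hp1, ENNReal.ofReal_one])
  have hP (w : ι → ℝ) : ∫ i, w i ∂P.toMeasure = ∑ i, p i * w i := by
    simp [PMF.integral_eq_sum, P, hp0]
  let Y i := v i - ∑ j, p j * v j
  have hoeffding : mgf Y P.toMeasure 1 ≤ exp (c ^ 2 / 2) := by
    have hc : (|c + c| / 2) ^ 2 = c ^ 2 := by
      rw [← two_mul, abs_mul, abs_two, mul_div_cancel_left₀ _ two_ne_zero, sq_abs]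
    simpa [hP, hc] using (hasSubgaussianMGF_of_mem_Icc (μ := P.toMeasure) (a := -c) (b := c)
      (measurable_of_countable v).aemeasurable
      (ae_of_all _ fun i => abs_le.1 (hv i))).mgf_le 1
  have hpos : 0 < mgf Y P.toMeasure 1 := mgf_pos .of_finite
  have hsplit : ∑ i, p i * exp (v i) = exp (∑ i, p i * v i) * mgf Y P.toMeasure 1 := by
    rw [mgf, hP, Finset.mul_sum]
    congr 1 with i
    rw [one_mul, exp_sub]
    field_simp
  rw [hsplit, log_mul (exp_pos _).ne' hpos.ne', log_exp]
  linarith [(log_le_log hpos hoeffding).trans_eq (log_exp _)]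

section FenchelYoung

variable {L : ℕ}

theorem dot_sub_left (g g' h : Fin L → ℝ) : dot (g - g') h = dot g h - dot g' h := by
  simp [dot, sub_mul, Finset.sum_sub_distrib]

theorem dot_add_right (g h h' : Fin L → ℝ) : dot g (h + h') = dot g h + dot g h' := by
  simp [dot, mul_add, Finset.sum_add_distrib]

theorem dot_smul_right (g h : Fin L → ℝ) (a : ℝ) : dot g (a • h) = a * dot g h := by
  simp [dot, Finset.mul_sum, mul_left_comm]

theorem dot_le_sum_abs {g f : Fin L → ℝ} (hf : ∀ y, |f y| ≤ 1) : dot g f ≤ ∑ y, |g y| := by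
  refine Finset.sum_le_sum fun y _ => ?_
  calc g y * f y ≤ |g y| * |f y| := by rw [← abs_mul]; exact le_abs_self _
    _ ≤ |g y| := mul_le_of_le_one_right (abs_nonneg _) (hf y)

theorem FYsh_add (g h v : Fin L → ℝ) :
    FYsh g (h + v) = FYsh g h + (lse (h + v) - lse h) - dot g v := by
  rw [FYsh, FYsh, dot_add_right]
  ring

variable [NeZero L]

theorem sum_exp_pos (h : Fin L → ℝ) : 0 < ∑ y, exp (h y) :=
  Finset.sum_pos (fun y _ => exp_pos (h y)) Finset.univ_nonempty

theorem softmax_nonneg (h : Fin L → ℝ) (y : Fin L) : 0 ≤ softmax h y :=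
  div_nonneg (exp_pos _).le (sum_exp_pos h).le

theorem sum_softmax (h : Fin L → ℝ) : ∑ y, softmax h y = 1 := by
  simp only [softmax, ← Finset.sum_div, div_self (sum_exp_pos h).ne']

theorem lse_add (h v : Fin L → ℝ) :
    lse (h + v) = lse h + log (∑ y, softmax h y * exp (v y)) := by
  have hmix : ∑ y, softmax h y * exp (v y) = (∑ y, exp ((h + v) y)) / ∑ y, exp (h y) := by
    simp only [softmax, Pi.add_apply, exp_add, Finset.sum_div]
    exact Finset.sum_congr rfl fun y _ => by ring
  rw [hmix, log_div (sum_exp_pos _).ne' (sum_exp_pos h).ne', lse, lse]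
  ring

theorem lse_add_le (h : Fin L → ℝ) {v : Fin L → ℝ} {c : ℝ} (hv : ∀ y, |v y| ≤ c) :
    lse (h + v) ≤ lse h + dot (softmax h) v + c ^ 2 / 2 := by
  rw [lse_add, dot]
  linarith [log_sum_mul_exp_le (softmax_nonneg h) (sum_softmax h) hv]

theorem FYsh_sub_smul_le (g h : Fin L → ℝ) {f : Fin L → ℝ} (hf : ∀ y, |f y| ≤ 1) (ε : ℝ) :
    FYsh g (h - ε • f) ≤ FYsh g h - ε * dot (softmax h - g) f + ε ^ 2 / 2 := by
  have hv : ∀ y, |((-ε) • f) y| ≤ |ε| := fun y => by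
    rw [Pi.smul_apply, smul_eq_mul, abs_mul, abs_neg]
    exact mul_le_of_le_one_right (abs_nonneg ε) (hf y)
  have hlse := lse_add_le h hv
  rw [sq_abs, dot_smul_right] at hlse
  rw [sub_eq_add_neg, ← neg_smul, FYsh_add, dot_sub_left, dot_smul_right]
  linarith

theorem FYsh_sub_smul_le_of_sum_abs_sub_softmax_le (g h gapprox : Fin L → ℝ) {f : Fin L → ℝ}
    (hf : ∀ y, |f y| ≤ 1) {ε δ : ℝ} (hε : 0 ≤ ε)
    (hclose : ∑ y, |gapprox y - softmax h y| ≤ δ) :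
    FYsh g (h - ε • f) ≤ FYsh g h - ε * dot (gapprox - g) f + ε * δ + ε ^ 2 / 2 := by
  have happrox : dot (gapprox - softmax h) f ≤ δ := (dot_le_sum_abs hf).trans hclose
  have hsplit : dot (gapprox - g) f = dot (softmax h - g) f + dot (gapprox - softmax h) f := by
    simp only [dot_sub_left]
    ring
  rw [hsplit, mul_add]
  linarith [FYsh_sub_smul_le g h hf ε, mul_le_mul_of_nonneg_left happrox hε]

end FenchelYoung

theorem mw_potential_decrease_general {X : Type*} [Fintype X] {L : ℕ} (hL : 0 < L)
    (μ : X → ℝ) (hμ0 : ∀ x, 0 ≤ μ x) (hμ1 : ∑ x, μ x = 1)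
    (ε : ℝ) (hε0 : 0 < ε)
    (gs h f gapprox : X → Fin L → ℝ)
    (hf : ∀ x y, |f x y| ≤ 1)
    (hclose : ∀ x, ∑ y, |gapprox x y - softmax (h x) y| ≤ ε / 10)
    (hdist : innerMu μ (fun x => gapprox x - gs x) f > ε) :
    FYmu μ gs (fun x => h x - ε • f x) < FYmu μ gs h - ε ^ 2 / 4 := by
  have : NeZero L := .of_pos hL
  have hpointwise x : FYsh (gs x) (h x - ε • f x) ≤
      FYsh (gs x) (h x) - ε * dot (gapprox x - gs x) (f x) + 3 / 5 * ε ^ 2 := by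
    linarith [FYsh_sub_smul_le_of_sum_abs_sub_softmax_le (gs x) (h x) (gapprox x) (hf x)
      hε0.le (hclose x)]
  have haverage : FYmu μ gs (fun x => h x - ε • f x) ≤
      FYmu μ gs h - ε * innerMu μ (fun x => gapprox x - gs x) f + 3 / 5 * ε ^ 2 :=
    calc _ ≤ ∑ x, μ x * (FYsh (gs x) (h x) - ε * dot (gapprox x - gs x) (f x) + 3 / 5 * ε ^ 2) :=
          Finset.sum_le_sum fun x _ => mul_le_mul_of_nonneg_left (hpointwise x) (hμ0 x)
      _ = _ := by
        simp only [FYmu, innerMu, mul_add, mul_sub, Finset.sum_add_distrib, Finset.sum_sub_distrib,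
          mul_left_comm (μ _) ε, ← Finset.mul_sum, ← Finset.sum_mul, hμ1, one_mul]
  linarith [mul_lt_mul_of_pos_left hdist hε0, pow_pos hε0 2]

/-- Per-step potential decrease for the multiplicative-weights update: if
`ĝ` is `ε/10`-close in `ℓ1` to `softmax ∘ h` pointwise, `‖f(x)‖∞ ≤ 1`, and
`⟨ĝ - g*, f⟩_μ > ε`, then `Γ_μ(g*, h - εf) < Γ_μ(g*, h) - ε²/4`. -/
theorem mw_potential_decrease {X : Type*} [Fintype X] {L : ℕ} (hL : 0 < L)
    (μ : X → ℝ) (hμ0 : ∀ x, 0 ≤ μ x) (hμ1 : ∑ x, μ x = 1)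
    (ε : ℝ) (hε0 : 0 < ε) (hε1 : ε < 1)
    (gs h f gapprox : X → Fin L → ℝ)
    (hgs : ∀ x, gs x ∈ simplex L)
    (hf : ∀ x y, |f x y| ≤ 1)
    (hgapprox : ∀ x, gapprox x ∈ simplex L)
    (hclose : ∀ x, ∑ y, |gapprox x y - softmax (h x) y| ≤ ε / 10)
    (hdist : innerMu μ (fun x => gapprox x - gs x) f > ε) :
    FYmu μ gs (fun x => h x - ε • f x) < FYmu μ gs h - ε ^ 2 / 4 :=
  mw_potential_decrease_general hL μ hμ0 hμ1 ε hε0 gs h f gapprox hf hclose hdist
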